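/- arXiv:2505.07131 — 6 statements merged into one kernel-verified Lean document; each statement's English description precedes it below -/
import Mathlib

section
/- Let E be a category with finite limits, (M, ∧, ⊤) an internal meet-semilattice, and μ = (μ_X : X → M) a family of maps satisfying the product property (μ_{X×Y} = ∧ ∘ (μ_X × μ_Y) for all X, Y). If every split monomorphism is non-singular with respect to μ, then μ is a lax cocone: for every morphism f : X → Y, μ_X ≤ μ_Y ∘ f. -/
open CategoryTheory CategoryTheory.Limits

universe v u

namespace Gauge

/-- An internal meet-semilattice `(M, ∧, ⊤)` in a finitely complete category. -/
structure InternalMeetSemilattice (E : Type u) [Category.{v} E] [HasFiniteLimits E] where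
  M : E
  meet : M ⨯ M ⟶ M
  top : ⊤_ E ⟶ M
  comm : (prod.braiding M M).hom ≫ meet = meet
  assoc : (prod.associator M M M).hom ≫ prod.map (𝟙 M) meet ≫ meet = prod.map meet (𝟙 M) ≫ meet
  idem : prod.lift (𝟙 M) (𝟙 M) ≫ meet = 𝟙 M
  unit : prod.lift (terminal.from M ≫ top) (𝟙 M) ≫ meet = 𝟙 M

variable {E : Type u} [Category.{v} E] [HasFiniteLimits E]

/-- The partial order induced on maps into `M`: `f ≤ g` iff `f ∧ g = f`. -/
def InternalMeetSemilattice.le (L : InternalMeetSemilattice E) {X : E} (f g : X ⟶ L.M) : Prop :=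
  prod.lift f g ≫ L.meet = f

/-- A map `f : X ⟶ Y` is non-singular w.r.t. the family `μ` if `μ_Y ∘ f = μ_X`. -/
def NonSingular (L : InternalMeetSemilattice E) (μ : ∀ X : E, X ⟶ L.M)
    {X Y : E} (f : X ⟶ Y) : Prop :=
  f ≫ μ Y = μ X

/-- The family `μ` is a lax cocone if `μ_X ≤ μ_Y ∘ f` for every `f : X ⟶ Y`. -/
def LaxCocone (L : InternalMeetSemilattice E) (μ : ∀ X : E, X ⟶ L.M) : Prop :=
  ∀ {X Y : E} (f : X ⟶ Y), L.le (μ X) (f ≫ μ Y)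

/-- The product property: `μ_{X × Y} = ∧ ∘ (μ_X × μ_Y)`. -/
def ProductProperty (L : InternalMeetSemilattice E) (μ : ∀ X : E, X ⟶ L.M) : Prop :=
  ∀ X Y : E, prod.map (μ X) (μ Y) ≫ L.meet = μ (X ⨯ Y)

instance isSplitMono_prod_lift_id {C : Type*} [Category C] {X Y : C} [HasBinaryProduct X Y]
    (f : X ⟶ Y) : IsSplitMono (prod.lift (𝟙 X) f) :=
  IsSplitMono.mk' { retraction := prod.fst, id := prod.lift_fst _ _ }

theorem ProductProperty.lift_comp {L : InternalMeetSemilattice E} {μ : ∀ X : E, X ⟶ L.M}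
    (hprod : ProductProperty L μ) {W X Y : E} (g : W ⟶ X) (h : W ⟶ Y) :
    prod.lift g h ≫ μ (X ⨯ Y) = prod.lift (g ≫ μ X) (h ≫ μ Y) ≫ L.meet := by
  rw [← hprod, prod.lift_map_assoc]

theorem ProductProperty.nonSingular_graph_iff {L : InternalMeetSemilattice E}
    {μ : ∀ X : E, X ⟶ L.M} (hprod : ProductProperty L μ) {X Y : E} (f : X ⟶ Y) :
    NonSingular L μ (prod.lift (𝟙 X) f) ↔ L.le (μ X) (f ≫ μ Y) := by
  rw [NonSingular, hprod.lift_comp, Category.id_comp, InternalMeetSemilattice.le]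

/-- if `μ` satisfies the product property and every split monomorphism
is non-singular, then `μ` is a lax cocone. -/
theorem stmt3 {E : Type u} [Category.{v} E] [HasFiniteLimits E]
    (L : InternalMeetSemilattice E) (μ : ∀ X : E, X ⟶ L.M)
    (hprod : ProductProperty L μ)
    (hsplit : ∀ {X Y : E} (m : X ⟶ Y), IsSplitMono m → NonSingular L μ m) :
    LaxCocone L μ :=
  fun f => (hprod.nonSingular_graph_iff f).1 (hsplit _ inferInstance)

end Gauge
end

section
/- Let E be a finitely complete category with a meet-semilattice (M, ∧, ⊤) and a lax cocone μ = (μ_X : X → M) such that every regular monomorphism is non-singular. Then for each object Y, the full subcategory N_μ(Y) of the slice category E/Y consisting of non-singular maps with codomain Y is coreflective in E/Y, and the counit of the coreflection is a regular monomorphism. Explicitly, the coreflection of f : X → Y is f ∘ β_X : X' → Y where β_X : X' → X is the equalizer of μ_X and μ_Y ∘ f. -/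
/-
If `g ≫ f` is non-singular, laxness gives both `μ_W ≤ g ≫ μ_X` and
`g ≫ μ_X ≤ g ≫ f ≫ μ_Y = μ_W`, so `g` equalizes `μ_X` and `f ≫ μ_Y`. Hence the maps from
non-singular objects into `f` are exactly those factoring through the equalizer `β_X` of these
two maps, and that factorization is unique because `β_X` is mono. Since `β_X` is a regular mono,
it is non-singular, and then so is `β_X ≫ f`, which is therefore the coreflection of `f`.
-/

open CategoryTheory CategoryTheory.Limits

universe v u

namespace Gauge

variable {E : Type u} [Category.{v} E] [HasFiniteLimits E]

namespace InternalMeetSemilattice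

variable (L : InternalMeetSemilattice E) {X : E}

lemma lift_meet_comm (a b : X ⟶ L.M) : prod.lift a b ≫ L.meet = prod.lift b a ≫ L.meet := by
  have hswap : prod.lift b a ≫ (prod.braiding L.M L.M).hom = prod.lift a b := by
    ext <;> simp only [prod.braiding, Category.assoc, prod.lift_fst, prod.lift_snd]
  rw [← hswap, Category.assoc, L.comm]

variable {L}

lemma le_antisymm {a b : X ⟶ L.M} (hab : L.le a b) (hba : L.le b a) : a = b :=
  calc a = prod.lift a b ≫ L.meet := hab.symm
    _ = prod.lift b a ≫ L.meet := L.lift_meet_comm a b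
    _ = b := hba

lemma le.comp_left {W : E} {a b : X ⟶ L.M} (g : W ⟶ X) (h : L.le a b) :
    L.le (g ≫ a) (g ≫ b) := by
  rw [InternalMeetSemilattice.le, ← prod.comp_lift, Category.assoc, h]

end InternalMeetSemilattice

variable {L : InternalMeetSemilattice E} {μ : ∀ X : E, X ⟶ L.M}

lemma LaxCocone.comp_μ_eq_of_nonSingular (hlax : LaxCocone L μ) {W X Y : E} {f : X ⟶ Y}
    {g : W ⟶ X} (h : NonSingular L μ (g ≫ f)) : g ≫ μ X = g ≫ f ≫ μ Y := by
  have hW : g ≫ f ≫ μ Y = μ W := by rw [← Category.assoc]; exact h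
  have hle : L.le (g ≫ μ X) (μ W) := hW ▸ (hlax f).comp_left g
  rw [hW]
  exact InternalMeetSemilattice.le_antisymm hle (hlax g)

lemma NonSingular.comp_of_comp_μ_eq {W X Y : E} {m : W ⟶ X} {f : X ⟶ Y}
    (hm : NonSingular L μ m) (h : m ≫ μ X = m ≫ f ≫ μ Y) : NonSingular L μ (m ≫ f) := by
  rw [NonSingular, Category.assoc, ← h]
  exact hm

lemma nonSingular_equalizer_ι_comp
    (hreg : ∀ {X Y : E} (m : X ⟶ Y), RegularMono m → NonSingular L μ m) {X Y : E} (f : X ⟶ Y) :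
    NonSingular L μ (equalizer.ι (μ X) (f ≫ μ Y) ≫ f) :=
  (hreg _ (RegularMono.equalizer _ _)).comp_of_comp_μ_eq (equalizer.condition _ _)

lemma LaxCocone.existsUnique_lift_equalizer (hlax : LaxCocone L μ) {W X Y : E} {f : X ⟶ Y}
    {g : W ⟶ X} (hg : NonSingular L μ (g ≫ f)) :
    ∃! t : W ⟶ equalizer (μ X) (f ≫ μ Y), t ≫ equalizer.ι (μ X) (f ≫ μ Y) = g :=
  ⟨equalizer.lift g (hlax.comp_μ_eq_of_nonSingular hg), equalizer.lift_ι _ _,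
    fun _ ht => equalizer.hom_ext (by simp [ht])⟩

variable (L μ) in
/-- The subcategory `N_μ(Y)` of `E/Y`. -/
def nonSingularOver (Y : E) : ObjectProperty (Over Y) := fun f => NonSingular L μ f.hom

section Coreflection

variable {Y : E}

noncomputable def coreflectionObj
    (hreg : ∀ {X Y : E} (m : X ⟶ Y), RegularMono m → NonSingular L μ m) (f : Over Y) :
    (nonSingularOver L μ Y).FullSubcategory :=
  ⟨Over.mk (equalizer.ι (μ f.left) (f.hom ≫ μ Y) ≫ f.hom), nonSingular_equalizer_ι_comp hreg f.hom⟩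

noncomputable def coreflectionHomEquiv (hlax : LaxCocone L μ)
    (hreg : ∀ {X Y : E} (m : X ⟶ Y), RegularMono m → NonSingular L μ m)
    (A : (nonSingularOver L μ Y).FullSubcategory) (f : Over Y) :
    ((nonSingularOver L μ Y).ι.obj A ⟶ f) ≃ (A ⟶ coreflectionObj hreg f) where
  toFun g :=
    have hg : NonSingular L μ (g.left ≫ f.hom) := by
      rw [NonSingular, Over.w g]
      exact A.property
    ObjectProperty.homMk <| Over.homMk (equalizer.lift g.left (hlax.comp_μ_eq_of_nonSingular hg))
      (by simp [coreflectionObj])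
  invFun h := Over.homMk (h.hom.left ≫ equalizer.ι _ _)
    (by simpa [coreflectionObj] using Over.w h.hom)
  left_inv g := by ext; exact equalizer.lift_ι _ _
  right_inv h := by ext; exact equalizer.hom_ext (equalizer.lift_ι _ _)

lemma isLeftAdjoint_ι_nonSingularOver (hlax : LaxCocone L μ)
    (hreg : ∀ {X Y : E} (m : X ⟶ Y), RegularMono m → NonSingular L μ m) (Y : E) :
    (nonSingularOver L μ Y).ι.IsLeftAdjoint :=
  (Adjunction.adjunctionOfEquivRight (coreflectionHomEquiv hlax hreg) (fun _ _ _ k g => by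
    ext
    refine equalizer.hom_ext ?_
    show equalizer.lift _ _ ≫ _ = (k.hom.left ≫ equalizer.lift g.left _) ≫ _
    rw [equalizer.lift_ι, Category.assoc, equalizer.lift_ι]
    rfl)).isLeftAdjoint

end Coreflection

/-- if every regular monomorphism is non-singular, then the full
subcategory of `E/Y` on non-singular maps is coreflective, the coreflection of
`f : X ⟶ Y` being `f ∘ β_X` where `β_X` is the equalizer of `μ_X` and `μ_Y ∘ f`;
the counit of the coreflection is a regular monomorphism. -/
theorem stmt4 {E : Type u} [Category.{v} E] [HasFiniteLimits E]
    (L : InternalMeetSemilattice E) (μ : ∀ X : E, X ⟶ L.M) (hlax : LaxCocone L μ)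
    (hreg : ∀ {X Y : E} (m : X ⟶ Y), RegularMono m → NonSingular L μ m) (Y : E) :
    (ObjectProperty.ι (fun f : Over Y => NonSingular L μ f.hom)).IsLeftAdjoint
    ∧ ∀ f : Over Y,
        NonSingular L μ (equalizer.ι (μ f.left) (f.hom ≫ μ Y) ≫ f.hom)
        ∧ Nonempty (RegularMono (equalizer.ι (μ f.left) (f.hom ≫ μ Y)))
        ∧ ∀ {W : E} (g : W ⟶ f.left), NonSingular L μ (g ≫ f.hom) →
            ∃! t : W ⟶ equalizer (μ f.left) (f.hom ≫ μ Y),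
              t ≫ equalizer.ι (μ f.left) (f.hom ≫ μ Y) = g :=
  ⟨isLeftAdjoint_ι_nonSingularOver hlax hreg Y, fun f =>
    ⟨nonSingular_equalizer_ι_comp hreg f.hom, ⟨RegularMono.equalizer _ _⟩,
      fun _ hg => hlax.existsUnique_lift_equalizer hg⟩⟩

end Gauge
end

section
/- Let E be a finitely complete category with an internal meet-semilattice (M, ∧, ⊤), and μ = (μ_X : X → M) a lax cocone satisfying the product property and such that all regular monomorphisms are non-singular. Then non-singular maps are closed under pullback: if f : X → Y is non-singular and the square with sides h : P → X, k : P → W, f : X → Y, g : W → Y is a pullback, then k is non-singular. -/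
/-!
The pairing `⟨h, k⟩ : P ⟶ X ⨯ W` of a pullback square is a regular monomorphism (the equalizer
of `fst ≫ f` and `snd ≫ g`), hence non-singular, so the product property gives
`μ_P = μ_X ∘ h ∧ μ_W ∘ k`. Non-singularity of `f` turns `μ_X ∘ h` into `μ_Y ∘ g ∘ k`, and
`μ_W ∘ k ∧ μ_Y ∘ g ∘ k = μ_W ∘ k` is the lax inequality `μ_W ≤ μ_Y ∘ g` precomposed with `k`.
-/

open CategoryTheory CategoryTheory.Limits

universe v u

namespace Gauge

variable {E : Type u} [Category.{v} E] [HasFiniteLimits E]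

noncomputable def _root_.CategoryTheory.IsPullback.regularMonoProdLift {C : Type*} [Category C]
    {P X W Y : C} {h : P ⟶ X} {k : P ⟶ W} {f : X ⟶ Y} {g : W ⟶ Y} [HasBinaryProduct X W]
    (hpb : IsPullback h k f g) : RegularMono (prod.lift h k) where
  Z := Y
  left := prod.fst ≫ f
  right := prod.snd ≫ g
  w := by rw [prod.lift_fst_assoc, prod.lift_snd_assoc, hpb.w]
  isLimit := Fork.IsLimit.mk _
    (fun s => hpb.lift (s.ι ≫ prod.fst) (s.ι ≫ prod.snd) (by simpa using s.condition))
    (fun s => by ext <;> simp [prod.lift_fst, prod.lift_snd])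
    (fun s m hm => hpb.hom_ext (by simp [← hm, prod.lift_fst]) (by simp [← hm, prod.lift_snd]))

theorem InternalMeetSemilattice.lift_meet_comm_s5 (L : InternalMeetSemilattice E) {X : E}
    (a b : X ⟶ L.M) : prod.lift a b ≫ L.meet = prod.lift b a ≫ L.meet := by
  conv_lhs => rw [← L.comm]
  rw [← Category.assoc, prod.braiding_hom, prod.comp_lift, prod.lift_fst, prod.lift_snd]

theorem InternalMeetSemilattice.le.comp {L : InternalMeetSemilattice E} {X Z : E}
    {a b : X ⟶ L.M} (hab : L.le a b) (k : Z ⟶ X) : L.le (k ≫ a) (k ≫ b) := by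
  rw [InternalMeetSemilattice.le, ← prod.comp_lift, Category.assoc, hab]

theorem ProductProperty.prod_lift_comp {L : InternalMeetSemilattice E} {μ : ∀ X : E, X ⟶ L.M}
    (hprod : ProductProperty L μ) {P X W : E} (h : P ⟶ X) (k : P ⟶ W) :
    prod.lift h k ≫ μ (X ⨯ W) = prod.lift (h ≫ μ X) (k ≫ μ W) ≫ L.meet := by
  rw [← hprod, ← Category.assoc, prod.lift_map]

/-- non-singular maps are closed under pullback. -/
theorem stmt5 {E : Type u} [Category.{v} E] [HasFiniteLimits E]
    (L : InternalMeetSemilattice E) (μ : ∀ X : E, X ⟶ L.M)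
    (hlax : LaxCocone L μ) (hprod : ProductProperty L μ)
    (hreg : ∀ {X Y : E} (m : X ⟶ Y), RegularMono m → NonSingular L μ m)
    {P W X Y : E} (f : X ⟶ Y) (g : W ⟶ Y) (h : P ⟶ X) (k : P ⟶ W)
    (hpb : IsPullback h k f g) (hf : NonSingular L μ f) :
    NonSingular L μ k := by
  have hμh : h ≫ μ X = k ≫ g ≫ μ Y := by
    rw [← hf, ← Category.assoc, hpb.w, Category.assoc]
  calc k ≫ μ W = prod.lift (k ≫ μ W) (k ≫ g ≫ μ Y) ≫ L.meet := ((hlax g).comp k).symm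
    _ = prod.lift (h ≫ μ X) (k ≫ μ W) ≫ L.meet := by rw [hμh, L.lift_meet_comm_s5]
    _ = prod.lift h k ≫ μ (X ⨯ W) := (hprod.prod_lift_comp h k).symm
    _ = μ P := hreg _ hpb.regularMonoProdLift

end Gauge
end

section
/- Let C be a small category and P a probe in C. For each presheaf X, define Sk_P(X)(C) ⊆ X(C) to be the set of P-singular figures of sort C. Then Sk_P(X) is a subpresheaf of X, the inclusion sk_{P,X} : Sk_P(X) → X is an isomorphism if and only if every figure of X is P-singular, and the family (sk_{P,X})_{X ∈ Psh(C)} is a coherent family of monomorphisms: for every mono ψ : X → Y of presheaves, Sk_P(X) is the pullback of Sk_P(Y) ↪ Y along ψ. -/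
/-! A monomorphism of presheaves is injective on figures, so it does not change the kernel of a
figure; hence it preserves and reflects `P`-singularity, which is the coherence. -/

open CategoryTheory Opposite

universe u

namespace ProbeTheory

variable {C : Type u} [SmallCategory C]

/-- An equivalence relation on an object `c` of `C`: for each `d`, a relation on
parallel pairs `d ⟶ c`, reflexive, symmetric, transitive, and closed under
precomposition with arbitrary morphisms. -/
structure EqRel (c : C) where
  rel : ∀ d : C, (d ⟶ c) → (d ⟶ c) → Prop
  refl : ∀ (d : C) (t : d ⟶ c), rel d t t
  symm : ∀ (d : C) (t₁ t₂ : d ⟶ c), rel d t₁ t₂ → rel d t₂ t₁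
  trans : ∀ (d : C) (t₁ t₂ t₃ : d ⟶ c), rel d t₁ t₂ → rel d t₂ t₃ → rel d t₁ t₃
  comp : ∀ (d' d : C) (g : d' ⟶ d) (t₁ t₂ : d ⟶ c), rel d t₁ t₂ → rel d' (g ≫ t₁) (g ≫ t₂)

theorem EqRel.ext' {c : C} {e e' : EqRel c}
    (h : ∀ (d : C) (t₁ t₂ : d ⟶ c), e.rel d t₁ t₂ ↔ e'.rel d t₁ t₂) : e = e' := by
  cases e; cases e'
  simp only [EqRel.mk.injEq]
  funext d t₁ t₂
  exact propext (h d t₁ t₂)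

/-- The restriction `e·f` of an equivalence relation along `f : b ⟶ c`. -/
def EqRel.restrict {b c : C} (e : EqRel c) (f : b ⟶ c) : EqRel b where
  rel d g₁ g₂ := e.rel d (g₁ ≫ f) (g₂ ≫ f)
  refl d t := e.refl d _
  symm d t₁ t₂ h := e.symm d _ _ h
  trans d t₁ t₂ t₃ h h' := e.trans d _ _ _ h h'
  comp d' d g t₁ t₂ h := by
    simp only [Category.assoc]
    exact e.comp d' d g _ _ h

/-- Containment of equivalence relations. -/
def EqRel.le {c : C} (e e' : EqRel c) : Prop :=
  ∀ (d : C) (t₁ t₂ : d ⟶ c), e.rel d t₁ t₂ → e'.rel d t₁ t₂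

/-- A probe: a set of equivalence relations on each object, stable under restriction. -/
structure Probe (C : Type u) [SmallCategory C] where
  P : ∀ c : C, Set (EqRel c)
  restrict_mem : ∀ ⦃b c : C⦄ (f : b ⟶ c) ⦃e : EqRel c⦄, e ∈ P c → e.restrict f ∈ P b

/-- A probe is saturated if each `P c` is upward closed. -/
def Probe.Saturated (Pr : Probe C) : Prop :=
  ∀ ⦃c : C⦄ ⦃e e' : EqRel c⦄, e ∈ Pr.P c → e.le e' → e' ∈ Pr.P c

/-- The kernel of a figure `x ∈ X(c)`. -/
def figureKernel {X : Cᵒᵖ ⥤ Type u} {c : C} (x : X.obj (op c)) : EqRel c where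
  rel d t₁ t₂ := X.map t₁.op x = X.map t₂.op x
  refl _ _ := rfl
  symm _ _ _ h := h.symm
  trans _ _ _ _ h h' := h.trans h'
  comp d' d g t₁ t₂ h := by
    show X.map (g ≫ t₁).op x = X.map (g ≫ t₂).op x
    rw [op_comp, op_comp, FunctorToTypes.map_comp_apply, FunctorToTypes.map_comp_apply, h]

theorem figureKernel_map {X : Cᵒᵖ ⥤ Type u} {b c : C} (f : b ⟶ c) (x : X.obj (op c)) :
    figureKernel (X.map f.op x) = (figureKernel x).restrict f := by
  apply EqRel.ext'
  intro d t₁ t₂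
  show (X.map t₁.op (X.map f.op x) = X.map t₂.op (X.map f.op x)) ↔
    (X.map (t₁ ≫ f).op x = X.map (t₂ ≫ f).op x)
  rw [op_comp, op_comp, FunctorToTypes.map_comp_apply, FunctorToTypes.map_comp_apply]

/-- A figure `x ∈ X(c)` is `P`-singular if its kernel belongs to `P c`. -/
def Singular (Pr : Probe C) {X : Cᵒᵖ ⥤ Type u} {c : C} (x : X.obj (op c)) : Prop :=
  figureKernel x ∈ Pr.P c

/-- The subpresheaf of `P`-singular figures. -/
def skSub (Pr : Probe C) (X : Cᵒᵖ ⥤ Type u) : Subfunctor X where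
  obj d := {x : X.obj d | Singular Pr (X := X) (c := d.unop) x}
  map {d d'} i x hx := by
    show Singular Pr (X.map i x)
    have h : figureKernel (X := X) (X.map (i.unop).op x) = (figureKernel x).restrict i.unop :=
      figureKernel_map i.unop x
    show figureKernel (X.map i x) ∈ Pr.P d'.unop
    rw [show (X.map i x) = (X.map (i.unop).op x) from rfl, h]
    exact Pr.restrict_mem i.unop hx

theorem figureKernel_app_of_mono {X Y : Cᵒᵖ ⥤ Type u} (ψ : X ⟶ Y) [Mono ψ] {c : C}
    (x : X.obj (op c)) : figureKernel (ψ.app (op c) x) = figureKernel x := by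
  refine EqRel.ext' fun d t₁ t₂ => ?_
  change Y.map t₁.op (ψ.app _ x) = Y.map t₂.op (ψ.app _ x) ↔ X.map t₁.op x = X.map t₂.op x
  rw [← NatTrans.naturality_apply, ← NatTrans.naturality_apply]
  exact (injective_of_mono (ψ.app (op d))).eq_iff

theorem singular_app_iff_of_mono (Pr : Probe C) {X Y : Cᵒᵖ ⥤ Type u} (ψ : X ⟶ Y) [Mono ψ]
    {c : C} (x : X.obj (op c)) : Singular Pr (ψ.app (op c) x) ↔ Singular Pr x := by
  rw [Singular, Singular, figureKernel_app_of_mono]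

theorem skSub_eq_top_iff (Pr : Probe C) (X : Cᵒᵖ ⥤ Type u) :
    skSub Pr X = ⊤ ↔ ∀ (c : C) (x : X.obj (op c)), Singular Pr x := by
  rw [Subfunctor.ext_iff, funext_iff]
  simp only [skSub, Subfunctor.top_obj, Set.top_eq_univ, Set.eq_univ_iff_forall, Set.mem_ofPred_eq]
  exact ⟨fun h c => h (op c), fun h d => h d.unop⟩

/-- `Sk_P X` is a subpresheaf of `X` (by construction, via `skSub`);
its inclusion is an isomorphism iff every figure of `X` is `P`-singular; and the
family of inclusions is coherent: for every mono `ψ : X ⟶ Y`, `Sk_P X` is the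
pullback (preimage) of `Sk_P Y` along `ψ`. -/
theorem stmt10 (Pr : Probe C) :
    (∀ X : Cᵒᵖ ⥤ Type u,
        (IsIso (skSub Pr X).ι ↔ ∀ (c : C) (x : X.obj (op c)), Singular Pr x))
    ∧ (∀ (X Y : Cᵒᵖ ⥤ Type u) (ψ : X ⟶ Y), Mono ψ →
        ∀ (c : C) (x : X.obj (op c)), (Singular Pr x ↔ Singular Pr (ψ.app (op c) x))) :=
  ⟨fun X => (Subfunctor.eq_top_iff_isIso _).symm.trans (skSub_eq_top_iff Pr X),
    fun _ _ ψ _ _ x => (singular_app_iff_of_mono Pr ψ x).symm⟩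

end ProbeTheory
end

section
/- Let E be a topos with local state classifier (ξ_X : X → Ξ)_{X∈E}, equipped with its canonical meet-semilattice structure making ξ a singularity gauge. Then every non-singular map f : X → Y (i.e., one with ξ_Y ∘ f = ξ_X) is cartesian with respect to every shell (B, β) on E: the naturality square of β at f is a pullback. -/
open CategoryTheory CategoryTheory.Limits

universe v u

namespace LSC

/-- A subobject classifier: a terminal-based truth map `truth : ⊤ ⟶ Ω` such that every
monomorphism is a pullback of `truth` along a unique characteristic map. -/
structure Classifier (E : Type u) [Category.{v} E] [HasTerminal E] where
  Ω : E
  truth : ⊤_ E ⟶ Ω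
  χ : ∀ {U X : E} (m : U ⟶ X), Mono m → (X ⟶ Ω)
  isPullback : ∀ {U X : E} (m : U ⟶ X) (hm : Mono m),
    IsPullback (terminal.from U) m truth (χ m hm)
  uniq : ∀ {U X : E} (m : U ⟶ X) (hm : Mono m) (c : X ⟶ Ω),
    IsPullback (terminal.from U) m truth c → c = χ m hm

/-- The bijective-on-objects wide subcategory of `E` determined by monomorphisms. -/
structure MonoCat (E : Type u) [Category.{v} E] : Type u where
  obj : E

instance {E : Type u} [Category.{v} E] : Category.{v} (MonoCat E) where
  Hom X Y := {f : X.obj ⟶ Y.obj // Mono f}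
  id X := ⟨𝟙 X.obj, inferInstance⟩
  comp f g := ⟨f.1 ≫ g.1, by haveI := f.2; haveI := g.2; exact mono_comp _ _⟩
  id_comp f := Subtype.ext (Category.id_comp f.1)
  comp_id f := Subtype.ext (Category.comp_id f.1)
  assoc f g h := Subtype.ext (Category.assoc f.1 g.1 h.1)

/-- The inclusion `E_m ⥤ E`. -/
def monoInclusion (E : Type u) [Category.{v} E] : MonoCat E ⥤ E where
  obj X := X.obj
  map f := f.1

universe u₁ v₁

/-- A shell: an idempotent comonad with pointwise monic counit whose naturality
squares at monomorphisms are pullbacks. -/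
structure Shell (E : Type u₁) [Category.{v₁} E] where
  G : Comonad E
  idem : ∀ X : E, IsIso (G.δ.app X)
  monic : ∀ X : E, Mono (G.ε.app X)
  cart : ∀ {X Y : E} (m : X ⟶ Y), Mono m →
    IsPullback ((G : E ⥤ E).map m) (G.ε.app X) (G.ε.app Y) m

/-- Cancelling the mono `i` gives `g ≫ tY = tX`, so the square pasted with `hY` is `hX`. -/
theorem isPullback_of_isPullback_mono_of_fac {C : Type*} [Category C]
    {A B X Y Z W : C} {g : A ⟶ B} {a : A ⟶ X} {b : B ⟶ Y} {f : X ⟶ Y}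
    {tX : A ⟶ Z} {tY : B ⟶ Z} {i : Z ⟶ W} [Mono i] {ξX : X ⟶ W} {ξY : Y ⟶ W}
    (sq : CommSq g a b f) (hX : IsPullback tX a i ξX) (hY : IsPullback tY b i ξY)
    (hf : f ≫ ξY = ξX) : IsPullback g a b f := by
  have htX : g ≫ tY = tX := by
    rw [← cancel_mono i, Category.assoc, hY.w, hX.w, ← hf, sq.w_assoc]
  exact IsPullback.of_right (by rwa [htX, hf]) sq.w hY

theorem stmt16_general {E : Type u} [Category.{v} E]
    (c : Cocone (monoInclusion E))
    (hgauge : ∀ S : Shell E, ∃ (Z : E) (i : Z ⟶ c.pt), Mono i ∧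
      ∀ X : E, ∃ t : (S.G : E ⥤ E).obj X ⟶ Z,
        IsPullback t (S.G.ε.app X) i (c.ι.app ⟨X⟩)) :
    ∀ (S : Shell E) {X Y : E} (f : X ⟶ Y),
      f ≫ c.ι.app ⟨Y⟩ = c.ι.app ⟨X⟩ →
      IsPullback ((S.G : E ⥤ E).map f) (S.G.ε.app X) (S.G.ε.app Y) f := by
  intro S X Y f hf
  obtain ⟨Z, i, hi, hclass⟩ := hgauge S
  obtain ⟨tX, hX⟩ := hclass X
  obtain ⟨tY, hY⟩ := hclass Y
  exact isPullback_of_isPullback_mono_of_fac ⟨S.G.ε.naturality f⟩ hX hY hf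

/-- in a topos with a local state classifier `(ξ_X : X ⟶ Ξ)` (here: a
colimit cocone `c` over the inclusion of monomorphisms, with the singularity-gauge
property that every shell is classified by a subobject of `Ξ`), every non-singular map
`f` (i.e. `ξ_Y ∘ f = ξ_X`) is cartesian with respect to every shell: the naturality
square of the counit at `f` is a pullback. -/
theorem stmt16 {E : Type u} [Category.{v} E] [HasFiniteLimits E]
    (hcc : Nonempty (@MonoidalClosed E _
      (CartesianMonoidalCategory.ofHasFiniteProducts (C := E)).toMonoidalCategory))
    (Cl : Classifier E)
    (c : Cocone (monoInclusion E)) (hc : IsColimit c)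
    (hgauge : ∀ S : Shell E, ∃ (Z : E) (i : Z ⟶ c.pt), Mono i ∧
      ∀ X : E, ∃ t : (S.G : E ⥤ E).obj X ⟶ Z,
        IsPullback t (S.G.ε.app X) i (c.ι.app ⟨X⟩)) :
    ∀ (S : Shell E) {X Y : E} (f : X ⟶ Y),
      f ≫ c.ι.app ⟨Y⟩ = c.ι.app ⟨X⟩ →
      IsPullback ((S.G : E ⥤ E).map f) (S.G.ε.app X) (S.G.ε.app Y) f :=
  stmt16_general c hgauge

end LSC
end

section
/- In the presheaf topos of reflexive graphs (presheaves on the full subcategory Δ₁ of nonempty finite ordinals on [0] and [1]), with local state classifier Ξ the reflexive graph with one node and two non-identity loops 'loop' and 'non-loop', and ξ_X sending non-identity loops of X to 'loop' and all other non-identity edges to 'non-loop': a morphism f : X → Y of reflexive graphs is non-singular if and only if f sends non-identity loops to non-identity loops, and edges between distinct nodes to edges between distinct nodes. -/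
/-!
Since `Ξ` has a single node, `ξ_Y ∘ f = ξ_X` just says that `f` preserves the kind of each
edge: identity, non-identity loop, or edge between distinct nodes. Identity edges are preserved
by every morphism, so only the two non-identity kinds impose a condition.
-/

universe u

namespace RefGraphs

/-- A reflexive graph: nodes, edges with source and target, and a distinguished
identity loop at each node. (Presheaves on `Δ₁`.) -/
structure RefGraph where
  V : Type u
  E : Type u
  src : E → V
  trg : E → V
  ide : V → E
  src_ide : ∀ v, src (ide v) = v
  trg_ide : ∀ v, trg (ide v) = v

/-- A morphism of reflexive graphs. -/
structure RGHom (X Y : RefGraph) where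
  onV : X.V → Y.V
  onE : X.E → Y.E
  src_comm : ∀ e, Y.src (onE e) = onV (X.src e)
  trg_comm : ∀ e, Y.trg (onE e) = onV (X.trg e)
  ide_comm : ∀ v, onE (X.ide v) = Y.ide (onV v)

/-- Composition of morphisms of reflexive graphs. -/
def RGHom.comp {X Y Z : RefGraph} (g : RGHom Y Z) (f : RGHom X Y) : RGHom X Z where
  onV := g.onV ∘ f.onV
  onE := g.onE ∘ f.onE
  src_comm e := by simp [g.src_comm, f.src_comm]
  trg_comm e := by simp [g.trg_comm, f.trg_comm]
  ide_comm v := by simp [f.ide_comm, g.ide_comm]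

/-- An edge is an identity edge if it is the distinguished loop at some node. -/
def IsIdentityEdge (X : RefGraph) (e : X.E) : Prop := ∃ v, e = X.ide v

/-- The edges of the local state classifier `Ξ` of reflexive graphs:
the identity loop, a non-identity loop, and a non-loop. -/
inductive XiE : Type u
  | id | loop | nonloop

/-- The local state classifier `Ξ` of reflexive graphs: one node and two
non-identity loops `loop` and `nonloop`. -/
def Xi : RefGraph where
  V := PUnit
  E := XiE
  src _ := PUnit.unit
  trg _ := PUnit.unit
  ide _ := XiE.id
  src_ide _ := rfl
  trg_ide _ := rfl

attribute [local instance] Classical.propDecidable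

/-- The component `ξ_X : X ⟶ Ξ` of the local state classifier cocone: non-identity
loops go to `loop`, edges between distinct nodes go to `nonloop`. -/
noncomputable def xi (X : RefGraph) : RGHom X Xi where
  onV _ := PUnit.unit
  onE e :=
    if IsIdentityEdge X e then XiE.id
    else if X.src e = X.trg e then XiE.loop else XiE.nonloop
  src_comm _ := rfl
  trg_comm _ := rfl
  ide_comm v := by
    show (if IsIdentityEdge X (X.ide v) then XiE.id
      else if X.src (X.ide v) = X.trg (X.ide v) then XiE.loop else XiE.nonloop) = XiE.id
    rw [if_pos ⟨v, rfl⟩]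

theorem IsIdentityEdge.src_eq_trg {X : RefGraph} {e : X.E} (he : IsIdentityEdge X e) :
    X.src e = X.trg e := by
  obtain ⟨v, rfl⟩ := he
  rw [X.src_ide, X.trg_ide]

theorem IsIdentityEdge.map {X Y : RefGraph} (f : RGHom X Y) {e : X.E}
    (he : IsIdentityEdge X e) : IsIdentityEdge Y (f.onE e) := by
  obtain ⟨v, rfl⟩ := he
  exact ⟨f.onV v, f.ide_comm v⟩

/-- `(xi X).onE e`, typed in `XiE` rather than in `Xi.E`, which `simp` does not see through. -/
noncomputable def edgeKind (X : RefGraph) (e : X.E) : XiE :=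
  if IsIdentityEdge X e then XiE.id
  else if X.src e = X.trg e then XiE.loop else XiE.nonloop

theorem edgeKind_eq_id_iff {X : RefGraph} {e : X.E} :
    edgeKind X e = XiE.id ↔ IsIdentityEdge X e := by
  by_cases hid : IsIdentityEdge X e <;> by_cases hloop : X.src e = X.trg e <;>
    simp [edgeKind, hid, hloop]

theorem edgeKind_eq_loop_iff {X : RefGraph} {e : X.E} :
    edgeKind X e = XiE.loop ↔ X.src e = X.trg e ∧ ¬ IsIdentityEdge X e := by
  by_cases hid : IsIdentityEdge X e <;> by_cases hloop : X.src e = X.trg e <;>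
    simp [edgeKind, hid, hloop]

theorem edgeKind_eq_nonloop_iff {X : RefGraph} {e : X.E} :
    edgeKind X e = XiE.nonloop ↔ X.src e ≠ X.trg e := by
  by_cases hid : IsIdentityEdge X e
  · simp [edgeKind, hid, hid.src_eq_trg]
  · by_cases hloop : X.src e = X.trg e <;> simp [edgeKind, hid, hloop]

theorem RGHom.ext_iff {X Y : RefGraph} {f g : RGHom X Y} :
    f = g ↔ f.onV = g.onV ∧ f.onE = g.onE := by
  constructor
  · rintro rfl
    exact ⟨rfl, rfl⟩
  · obtain ⟨_, _, _, _, _⟩ := f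
    obtain ⟨_, _, _, _, _⟩ := g
    rintro ⟨rfl, rfl⟩
    rfl

universe v

theorem xi_comp_eq_xi_iff {X Y : RefGraph} (f : RGHom X Y) :
    (xi.{_, v} Y).comp f = xi.{_, v} X ↔
      ∀ e, edgeKind.{_, v} Y (f.onE e) = edgeKind.{_, v} X e := by
  rw [RGHom.ext_iff, funext_iff (f := ((xi Y).comp f).onE)]
  exact and_iff_right rfl

/-- a morphism `f : X ⟶ Y` of reflexive graphs is non-singular
(`ξ_Y ∘ f = ξ_X`) iff it sends non-identity loops to non-identity loops and
edges between distinct nodes to edges between distinct nodes. -/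
theorem stmt18 {X Y : RefGraph} (f : RGHom X Y) :
    (xi Y).comp f = xi X ↔
      ((∀ e : X.E, X.src e = X.trg e → ¬ IsIdentityEdge X e →
          Y.src (f.onE e) = Y.trg (f.onE e) ∧ ¬ IsIdentityEdge Y (f.onE e))
       ∧ (∀ e : X.E, X.src e ≠ X.trg e → Y.src (f.onE e) ≠ Y.trg (f.onE e))) := by
  rw [xi_comp_eq_xi_iff]
  constructor
  · intro h
    refine ⟨fun e hloop hnid => ?_, fun e hne => ?_⟩
    · exact edgeKind_eq_loop_iff.mp ((h e).trans (edgeKind_eq_loop_iff.mpr ⟨hloop, hnid⟩))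
    · exact edgeKind_eq_nonloop_iff.mp ((h e).trans (edgeKind_eq_nonloop_iff.mpr hne))
  · rintro ⟨hloop, hnonloop⟩ e
    cases hkind : edgeKind X e
    · exact edgeKind_eq_id_iff.mpr ((edgeKind_eq_id_iff.mp hkind).map f)
    · obtain ⟨hsrc, hnid⟩ := edgeKind_eq_loop_iff.mp hkind
      exact edgeKind_eq_loop_iff.mpr (hloop e hsrc hnid)
    · exact edgeKind_eq_nonloop_iff.mpr (hnonloop e (edgeKind_eq_nonloop_iff.mp hkind))

end RefGraphs
end
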